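/- arXiv:1412.6294 — 2 statements merged into one kernel-verified Lean document; each statement's English description precedes it below -/
import Mathlib

section
/- Fix t ∈ (0, √3/2) and let c_off ∈ (0, √3/2) be the unique number with ∫₀^{c_off} dτ/(1−2δ_τ) = 1. Call a finite partition 0 = t₀ < t₁ < … < t_{n+1} = t of [0,t] (n ∈ ℕ₀) admissible if, setting λ_j := (t_{j+1} − t_j)/(1 − 2δ_{t_j}) for j = 0,…,n, one has λ₀ = t₁ ≤ c_off and λ_j ≤ 1/π for j = 1,…,n, and assign to it the value F := (π/2)·∫₀^{λ₀} dτ/(1−2δ_τ) + (1/2)·Σ_{j=1}^{n} arcsin(πλ_j). Then for every admissible partition of [0,t] there exists another admissible partition of [0,t] with strictly smaller value F; in particular, no admissible finite partition minimizes F. -/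
/-!
Inserting a point `r` just below `t₁` trades the contribution `(π/2) ∫_r^{t₁} w` of the first
interval, `w τ = 1/(1 - 2δ_τ)`, for `(1/2) arcsin (π (t₁ - r) w(r))`. Since `δ_τ = (√(1+4τ²) - 1)/2`,
the weight `w` grows at least linearly, `w b ≥ w a + a (b - a)`, so `π ∫_r^{t₁} w` exceeds
`x = π (t₁ - r) w(r)` by a term quadratic in `t₁ - r`, while `arcsin x - x` is only cubic.
-/

open MeasureTheory

/-- `δ_τ = τ · tan((1/2)·arctan(2τ))`. -/
noncomputable def delta (t : ℝ) : ℝ := t * Real.tan ((1/2) * Real.arctan (2*t))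

/-- A finite partition `0 = t₀ < t₁ < … < t_{n+1} = T` of `[0, T]` is admissible if
`λ₀ = t₁ ≤ c_off` and `λ_j = (t_{j+1} − t_j)/(1 − 2δ_{t_j}) ≤ 1/π` for `j = 1, …, n`. -/
def Admissible (coff T : ℝ) (n : ℕ) (t : Fin (n+2) → ℝ) : Prop :=
  StrictMono t ∧ t 0 = 0 ∧ t (Fin.last (n+1)) = T ∧ t 1 ≤ coff ∧
    ∀ j : Fin (n+1), j ≠ 0 →
      (t j.succ - t j.castSucc) / (1 - 2 * delta (t j.castSucc)) ≤ 1/Real.pi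

/-- The value `F = (π/2)·∫₀^{λ₀} dτ/(1−2δ_τ) + (1/2)·Σ_{j=1}^n arcsin(πλ_j)`
assigned to a partition (note `λ₀ = t₁`). -/
noncomputable def valF (n : ℕ) (t : Fin (n+2) → ℝ) : ℝ :=
  (Real.pi/2) * (∫ τ in (0:ℝ)..(t 1), 1/(1 - 2 * delta τ)) +
    (1/2) * ∑ j ∈ Finset.univ.filter (fun j : Fin (n+1) => j ≠ 0),
      Real.arcsin (Real.pi * (t j.succ - t j.castSucc) / (1 - 2 * delta (t j.castSucc)))

open Real

theorem Real.tan_half (θ : ℝ) : tan (θ / 2) = sin θ / (1 + cos θ) := by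
  rw [tan_eq_sin_div_cos]
  conv_rhs => rw [← mul_div_cancel₀ θ (two_ne_zero' ℝ), sin_two_mul, cos_two_mul]
  rcases eq_or_ne (cos (θ / 2)) 0 with h | h
  · simp [h]
  · field_simp
    ring

theorem Real.arcsin_lt_add_pow_three {x : ℝ} (hx : 0 < x) (hx' : x ≤ 1 / 2) :
    arcsin x < x + x ^ 3 := by
  have hx2 : x ^ 2 ≤ 1 / 4 := by nlinarith
  have hx3 : x ^ 3 ≤ x / 4 := by nlinarith [mul_le_mul_of_nonneg_left hx2 hx.le]
  have hcube : (x + x ^ 3) ^ 3 < 6 * x ^ 3 := by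
    have h : (1 + x ^ 2) ^ 3 ≤ (5 / 4) ^ 3 := pow_le_pow_left₀ (by positivity) (by linarith) 3
    nlinarith [mul_le_mul_of_nonneg_left h (pow_pos hx 3).le, pow_pos hx 3]
  have hsin := sin_gt_sub_cube (show 0 < x + x ^ 3 by positivity)
  rw [arcsin_lt_iff_lt_sin' ⟨by linarith [pi_pos, pow_pos hx 3], by linarith [pi_gt_three]⟩]
  linarith

lemma delta_eq_sqrt (τ : ℝ) : delta τ = (√(1 + 4 * τ ^ 2) - 1) / 2 := by
  have hS : 1 ≤ √(1 + 4 * τ ^ 2) := one_le_sqrt.mpr (by nlinarith)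
  have hS2 : √(1 + 4 * τ ^ 2) ^ 2 = 1 + 4 * τ ^ 2 := sq_sqrt (by positivity)
  rw [delta, one_div_mul_eq_div, tan_half, sin_arctan, cos_arctan, mul_pow,
    show (2 : ℝ) ^ 2 = 4 by norm_num]
  generalize √(1 + 4 * τ ^ 2) = S at *
  field_simp
  nlinarith

lemma one_sub_two_mul_delta (τ : ℝ) : 1 - 2 * delta τ = 2 - √(1 + 4 * τ ^ 2) := by
  rw [delta_eq_sqrt]
  ring

noncomputable def weight (τ : ℝ) : ℝ := 1 / (1 - 2 * delta τ)

section Weight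

variable {τ a b : ℝ}

lemma sqrt_one_add_four_mul_sq_lt_two (h0 : 0 ≤ τ) (h : τ < √3 / 2) :
    √(1 + 4 * τ ^ 2) < 2 := by
  have h3 : τ ^ 2 < 3 / 4 := by
    nlinarith [sq_sqrt (show (0 : ℝ) ≤ 3 by norm_num), sqrt_nonneg 3]
  exact (sqrt_lt' two_pos).mpr (by linarith)

lemma one_sub_two_mul_delta_pos (h0 : 0 ≤ τ) (h : τ < √3 / 2) : 0 < 1 - 2 * delta τ := by
  rw [one_sub_two_mul_delta]
  linarith [sqrt_one_add_four_mul_sq_lt_two h0 h]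

lemma one_le_weight (h0 : 0 ≤ τ) (h : τ < √3 / 2) : 1 ≤ weight τ := by
  have hS : 1 ≤ √(1 + 4 * τ ^ 2) := one_le_sqrt.mpr (by nlinarith)
  rw [weight, le_div_iff₀ (one_sub_two_mul_delta_pos h0 h), one_sub_two_mul_delta]
  linarith

lemma weight_add_mul_sub_le (ha : 0 ≤ a) (hab : a ≤ b) (hb : b < √3 / 2) :
    weight a + a * (b - a) ≤ weight b := by
  have hb0 : 0 ≤ b := ha.trans hab
  have hSa1 : 1 ≤ √(1 + 4 * a ^ 2) := one_le_sqrt.mpr (by nlinarith)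
  have hSa2 := sqrt_one_add_four_mul_sq_lt_two ha (hab.trans_lt hb)
  have hSb2 := sqrt_one_add_four_mul_sq_lt_two hb0 hb
  have hSa : √(1 + 4 * a ^ 2) ^ 2 = 1 + 4 * a ^ 2 := sq_sqrt (by positivity)
  have hSb : √(1 + 4 * b ^ 2) ^ 2 = 1 + 4 * b ^ 2 := sq_sqrt (by positivity)
  have hle : √(1 + 4 * a ^ 2) ≤ √(1 + 4 * b ^ 2) := sqrt_le_sqrt (by nlinarith)
  rw [weight, weight, one_sub_two_mul_delta, one_sub_two_mul_delta]
  generalize √(1 + 4 * a ^ 2) = Sa at *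
  generalize √(1 + 4 * b ^ 2) = Sb at *
  -- `1/(2 - Sb) - 1/(2 - Sa) ≥ Sb - Sa` as both denominators are at most `1`,
  -- and `Sb - Sa = 4 (b² - a²)/(Sa + Sb) ≥ b² - a² ≥ a (b - a)`.
  have hgap : a * (b - a) ≤ Sb - Sa := by nlinarith [mul_nonneg hb0 (sub_nonneg.mpr hab)]
  have hquot : Sb - Sa ≤ 1 / (2 - Sb) - 1 / (2 - Sa) := by
    rw [div_sub_div _ _ (by linarith) (by linarith), le_div_iff₀ (by nlinarith)]
    nlinarith [mul_nonneg (sub_nonneg.mpr hle) (by nlinarith : (0:ℝ) ≤ 1 - (2 - Sb) * (2 - Sa))]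
  linarith

lemma monotoneOn_weight : MonotoneOn weight (Set.Ico 0 (√3 / 2)) := fun a ha b hb hab => by
  nlinarith [weight_add_mul_sub_le ha.1 hab hb.2, mul_nonneg ha.1 (sub_nonneg.mpr hab)]

lemma continuousOn_weight : ContinuousOn weight (Set.Ico 0 (√3 / 2)) := by
  have : weight = fun τ => 1 / (2 - √(1 + 4 * τ ^ 2)) := by
    funext τ
    rw [weight, one_sub_two_mul_delta]
  rw [this]
  refine continuousOn_const.div (by fun_prop) fun τ hτ => ?_
  linarith [sqrt_one_add_four_mul_sq_lt_two hτ.1 hτ.2]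

lemma intervalIntegrable_weight (ha : 0 ≤ a) (hab : a ≤ b) (hb : b < √3 / 2) :
    IntervalIntegrable weight volume a b :=
  (continuousOn_weight.mono fun τ hτ => by
    rw [Set.uIcc_of_le hab] at hτ
    exact ⟨ha.trans hτ.1, hτ.2.trans_lt hb⟩).intervalIntegrable

lemma mul_weight_le_integral (ha : 0 ≤ a) (hab : a ≤ b) (hb : b < √3 / 2) :
    (b - a) * weight a ≤ ∫ τ in a..b, weight τ := by
  rw [← smul_eq_mul, ← intervalIntegral.integral_const]
  exact intervalIntegral.integral_mono_on hab intervalIntegrable_const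
    (intervalIntegrable_weight ha hab hb) fun τ hτ =>
      monotoneOn_weight ⟨ha, hab.trans_lt hb⟩ ⟨ha.trans hτ.1, hτ.2.trans_lt hb⟩ hτ.1

-- Bound the integral on each half of `[a, b]` by the value at its left end.
lemma mul_weight_add_le_integral (ha : 0 ≤ a) (hab : a ≤ b) (hb : b < √3 / 2) :
    (b - a) * weight a + a * (b - a) ^ 2 / 4 ≤ ∫ τ in a..b, weight τ := by
  obtain ⟨m, hm_def⟩ : ∃ m, m = (a + b) / 2 := ⟨_, rfl⟩
  have ham : a ≤ m := by linarith
  have hmb : m ≤ b := by linarith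
  have hm : 0 ≤ m := ha.trans ham
  rw [← intervalIntegral.integral_add_adjacent_intervals
    (intervalIntegrable_weight ha ham (hmb.trans_lt hb)) (intervalIntegrable_weight hm hmb hb)]
  have h1 := mul_weight_le_integral ha ham (hmb.trans_lt hb)
  have h2 := mul_weight_le_integral hm hmb hb
  have hw := weight_add_mul_sub_le ha ham (hmb.trans_lt hb)
  calc (b - a) * weight a + a * (b - a) ^ 2 / 4
      = (m - a) * weight a + (b - m) * (weight a + a * (m - a)) := by subst hm_def; ring
    _ ≤ (m - a) * weight a + (b - m) * weight m := by gcongr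
    _ ≤ _ := add_le_add h1 h2

end Weight

lemma arcsin_lt_pi_mul_integral_weight {r t : ℝ} (hr : 0 < r) (hrt : r < t) (ht : t < √3 / 2)
    (hx : π * (t - r) * weight r ≤ 1 / 2)
    (hx3 : (π * (t - r) * weight r) ^ 3 ≤ π * (r * (t - r) ^ 2 / 4)) :
    arcsin (π * (t - r) * weight r) < π * ∫ τ in r..t, weight τ := by
  have hw := one_le_weight hr.le (hrt.trans ht)
  have hx0 : 0 < π * (t - r) * weight r := by
    have := sub_pos.mpr hrt
    positivity
  calc arcsin (π * (t - r) * weight r)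
      < π * (t - r) * weight r + (π * (t - r) * weight r) ^ 3 := arcsin_lt_add_pow_three hx0 hx
    _ ≤ π * ((t - r) * weight r + r * (t - r) ^ 2 / 4) := by linarith
    _ ≤ π * ∫ τ in r..t, weight τ := by
      gcongr
      exact mul_weight_add_le_integral hr.le hrt.le ht

lemma exists_arcsin_lt_pi_mul_integral_weight {t : ℝ} (ht0 : 0 < t) (ht : t < √3 / 2) :
    ∃ r, 0 < r ∧ r < t ∧ (t - r) / (1 - 2 * delta r) ≤ 1 / π ∧
      arcsin (π * (t - r) / (1 - 2 * delta r)) < π * ∫ τ in r..t, weight τ := by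
  set G := weight t
  have hG : 1 ≤ G := one_le_weight ht0.le ht
  have hsqrt3 : √3 < 2 := by
    rw [sqrt_lt' two_pos]
    norm_num
  obtain ⟨s, hs0, hsG⟩ : ∃ s, 0 < s ∧ π ^ 2 * s * G ^ 3 = t / 8 :=
    ⟨t / (8 * π ^ 2 * G ^ 3), by positivity, by field_simp⟩
  have hπG : 1 ≤ π * G := one_le_mul_of_one_le_of_one_le (by linarith [pi_gt_three]) hG
  have hπG2 : 1 ≤ π * G ^ 2 := by nlinarith
  have hsmall : π * s * G ≤ t / 8 := by nlinarith [mul_pos (mul_pos pi_pos hs0) (by positivity : 0 < G)]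
  have hst : s ≤ t / 2 := by nlinarith [pi_gt_three]
  set r := t - s with hr
  have hr0 : t / 2 ≤ r := by linarith
  have hts : t - r = s := by ring
  have hw1 : 1 ≤ weight r := one_le_weight (by linarith) (by linarith)
  have hwG : weight r ≤ G := monotoneOn_weight ⟨by linarith, by linarith⟩ ⟨ht0.le, ht⟩ (by linarith)
  have hx : π * s * weight r ≤ 1 / 2 := by
    nlinarith [mul_le_mul_of_nonneg_left hwG (mul_pos pi_pos hs0).le]
  have hx3 : (π * s * weight r) ^ 3 ≤ π * (r * s ^ 2 / 4) := by
    calc (π * s * weight r) ^ 3 ≤ (π * s * G) ^ 3 := by gcongr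
      _ = π * s ^ 2 * (π ^ 2 * s * G ^ 3) := by ring
      _ ≤ π * (r * s ^ 2 / 4) := by
        rw [hsG]
        nlinarith [mul_nonneg (mul_nonneg pi_pos.le (sq_nonneg s)) (sub_nonneg.mpr hr0)]
  have hdiv : ∀ c, c / (1 - 2 * delta r) = c * weight r := fun c => div_eq_mul_one_div c _
  refine ⟨r, by linarith, by linarith, ?_, ?_⟩
  · rw [hdiv, hts, le_div_iff₀ pi_pos]
    linarith
  · have := arcsin_lt_pi_mul_integral_weight (r := r) (by linarith) (by linarith) ht
      (by rwa [hts]) (by rwa [hts])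
    rwa [hdiv]

section Refinement

variable {α : Type*} {n : ℕ}

lemma insertNth_one_apply_zero (x : α) (t : Fin (n + 2) → α) :
    (Fin.insertNth 1 x t : Fin (n + 3) → α) 0 = t 0 := by
  rw [← Fin.one_succAbove_zero, Fin.insertNth_apply_succAbove]

lemma insertNth_one_apply_one (x : α) (t : Fin (n + 2) → α) :
    (Fin.insertNth 1 x t : Fin (n + 3) → α) 1 = x :=
  Fin.insertNth_apply_same _ _ _

lemma insertNth_one_apply_succ_succ (x : α) (t : Fin (n + 2) → α) (j : Fin (n + 1)) :
    (Fin.insertNth 1 x t : Fin (n + 3) → α) j.succ.succ = t j.succ := by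
  rw [← Fin.one_succAbove_succ, Fin.insertNth_apply_succAbove]

lemma insertNth_one_apply_castSucc_succ_succ (x : α) (t : Fin (n + 2) → α) (j : Fin n) :
    (Fin.insertNth 1 x t : Fin (n + 3) → α) j.succ.succ.castSucc = t j.succ.castSucc := by
  rw [← Fin.succ_castSucc, ← Fin.succ_castSucc, insertNth_one_apply_succ_succ, Fin.succ_castSucc]

lemma Fin.sum_filter_ne_zero {M : Type*} [AddCommGroup M] (f : Fin (n + 1) → M) :
    ∑ j ∈ Finset.univ.filter (· ≠ 0), f j = ∑ j : Fin n, f j.succ := by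
  rw [Finset.filter_ne', Finset.sum_erase_eq_sub (Finset.mem_univ 0), Fin.sum_univ_succ,
    add_sub_cancel_left]

variable {coff T r : ℝ} {t : Fin (n + 2) → ℝ}

lemma Admissible.apply_one_pos (ht : Admissible coff T n t) : 0 < t 1 :=
  ht.2.1 ▸ ht.1 Fin.zero_lt_one

lemma Admissible.apply_one_le (ht : Admissible coff T n t) : t 1 ≤ T :=
  ht.2.2.1 ▸ ht.1.monotone (Fin.le_last 1)

lemma Admissible.insertNth_one (ht : Admissible coff T n t) (hr0 : 0 < r) (hr1 : r < t 1)
    (hlen : (t 1 - r) / (1 - 2 * delta r) ≤ 1 / π) :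
    Admissible coff T (n + 1) (Fin.insertNth 1 r t) := by
  obtain ⟨hmono, h0, hlast, h1, hlent⟩ := ht
  refine ⟨Fin.strictMono_insertNth hmono 0 r (h0 ▸ hr0) hr1, ?_, ?_, ?_, ?_⟩
  · rw [insertNth_one_apply_zero, h0]
  · rw [← Fin.succ_last, ← Fin.succ_last, insertNth_one_apply_succ_succ, Fin.succ_last, hlast]
  · exact (insertNth_one_apply_one r t).trans_le (hr1.le.trans h1)
  · intro j hj
    obtain ⟨k, rfl⟩ := Fin.exists_succ_eq.mpr hj
    rcases Fin.eq_zero_or_eq_succ k with rfl | ⟨l, rfl⟩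
    · rw [insertNth_one_apply_succ_succ]
      exact (insertNth_one_apply_one r t).symm ▸ hlen
    · rw [insertNth_one_apply_succ_succ, insertNth_one_apply_castSucc_succ_succ]
      exact hlent l.succ (Fin.succ_ne_zero l)

lemma valF_insertNth_one (hr0 : 0 ≤ r) (hr1 : r ≤ t 1) (ht1 : t 1 < √3 / 2) :
    valF (n + 1) (Fin.insertNth 1 r t) = valF n t - π / 2 * (∫ τ in r..t 1, weight τ)
      + 1 / 2 * arcsin (π * (t 1 - r) / (1 - 2 * delta r)) := by
  have hsplit := intervalIntegral.integral_add_adjacent_intervals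
    (intervalIntegrable_weight le_rfl hr0 (hr1.trans_lt ht1)) (intervalIntegrable_weight hr0 hr1 ht1)
  simp only [valF, Fin.sum_filter_ne_zero, Fin.sum_univ_succ (n := n), ← weight.eq_1,
    insertNth_one_apply_one, insertNth_one_apply_succ_succ, insertNth_one_apply_castSucc_succ_succ,
    Fin.succ_zero_eq_one, Fin.castSucc_one]
  rw [← hsplit]
  ring

end Refinement

theorem no_minimizing_partition_general (T coff : ℝ) (hT : T ∈ Set.Ioo 0 (Real.sqrt 3 / 2)) :
    (∀ (n : ℕ) (t : Fin (n+2) → ℝ), Admissible coff T n t →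
      ∃ (m : ℕ) (u : Fin (m+2) → ℝ), Admissible coff T m u ∧ valF m u < valF n t) ∧
    ¬ ∃ (n : ℕ) (t : Fin (n+2) → ℝ), Admissible coff T n t ∧
      ∀ (m : ℕ) (u : Fin (m+2) → ℝ), Admissible coff T m u → valF n t ≤ valF m u := by
  have improve : ∀ (n : ℕ) (t : Fin (n+2) → ℝ), Admissible coff T n t →
      ∃ (m : ℕ) (u : Fin (m+2) → ℝ), Admissible coff T m u ∧ valF m u < valF n t := by
    intro n t ht
    have ht1 : t 1 < √3 / 2 := ht.apply_one_le.trans_lt hT.2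
    obtain ⟨r, hr0, hr1, hlen, hgain⟩ :=
      exists_arcsin_lt_pi_mul_integral_weight ht.apply_one_pos ht1
    refine ⟨n + 1, Fin.insertNth 1 r t, ht.insertNth_one hr0 hr1 hlen, ?_⟩
    rw [valF_insertNth_one hr0.le hr1.le ht1]
    linarith
  exact ⟨improve, fun ⟨n, t, ht, hmin⟩ =>
    let ⟨m, u, hu, hlt⟩ := improve n t ht
    (hmin m u hu).not_gt hlt⟩

theorem no_minimizing_partition (T coff : ℝ) (hT : T ∈ Set.Ioo 0 (Real.sqrt 3 / 2))
    (hcoff : coff ∈ Set.Ioo 0 (Real.sqrt 3 / 2))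
    (hcoff' : (∫ τ in (0:ℝ)..coff, 1/(1 - 2 * delta τ)) = 1)
    (hcoffu : ∀ c ∈ Set.Ioo 0 (Real.sqrt 3 / 2),
      (∫ τ in (0:ℝ)..c, 1/(1 - 2 * delta τ)) = 1 → c = coff) :
    (∀ (n : ℕ) (t : Fin (n+2) → ℝ), Admissible coff T n t →
      ∃ (m : ℕ) (u : Fin (m+2) → ℝ), Admissible coff T m u ∧ valF m u < valF n t) ∧
    ¬ ∃ (n : ℕ) (t : Fin (n+2) → ℝ), Admissible coff T n t ∧
      ∀ (m : ℕ) (u : Fin (m+2) → ℝ), Admissible coff T m u → valF n t ≤ valF m u :=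
  no_minimizing_partition_general T coff hT
end

section
/- For every t with 0 < t < √3/2 and every ρ with 0 < ρ < t, setting t₁ := ρ and assuming t₁ ≤ c_off, one can choose r ∈ (0, t₁) with (t₁ − r)/(1 − 2δ_r) ≤ 1/π and (1/2)·arcsin(π·(t₁ − r)/(1 − 2δ_r)) < (π/2)·∫_r^{t₁} dτ/(1 − 2δ_τ); consequently (π/2)·∫₀^{r} dτ/(1−2δ_τ) + (1/2)·arcsin(π·(t₁−r)/(1−2δ_r)) < (π/2)·∫₀^{t₁} dτ/(1−2δ_τ). -/
open MeasureTheory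

lemma delta_nonneg (t : ℝ) : 0 ≤ delta t := by
  unfold delta
  have hlt := Real.arctan_lt_pi_div_two (2*t)
  have hgt := Real.neg_pi_div_two_lt_arctan (2*t)
  rcases le_or_gt 0 t with h | h
  · have h1 : 0 ≤ Real.arctan (2*t) := by
      rw [← Real.arctan_zero]
      exact Real.arctan_strictMono.monotone (by linarith)
    exact mul_nonneg h (Real.tan_nonneg_of_nonneg_of_le_pi_div_two (by linarith) (by linarith))
  · have h1 : Real.arctan (2*t) ≤ 0 := by
      rw [← Real.arctan_zero]
      exact Real.arctan_strictMono.monotone (by linarith)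
    have h2 := Real.tan_nonpos_of_nonpos_of_neg_pi_div_two_le
      (x := (1/2) * Real.arctan (2*t)) (by linarith) (by linarith)
    nlinarith [mul_nonneg (neg_nonneg.mpr h.le) (neg_nonneg.mpr h2)]

lemma delta_sq (t : ℝ) : delta t ^ 2 + delta t = t ^ 2 := by
  have hlt := Real.arctan_lt_pi_div_two (2*t)
  have hgt := Real.neg_pi_div_two_lt_arctan (2*t)
  have hpi := Real.pi_pos
  set φ := (1/2) * Real.arctan (2*t) with hφ
  set τ := Real.tan φ with hτ
  have h2φ : Real.tan (2 * φ) = 2 * t := by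
    rw [show 2 * φ = Real.arctan (2*t) by rw [hφ]; ring, Real.tan_arctan]
  have htm : Real.tan (2*φ) = 2 * τ / (1 - τ^2) := Real.tan_two_mul
  have hτ1 : τ < 1 := by
    rw [hτ, ← Real.tan_pi_div_four]
    exact Real.tan_lt_tan_of_lt_of_lt_pi_div_two (by rw [hφ]; linarith) (by linarith)
      (by rw [hφ]; linarith)
  have hτ2 : -1 < τ := by
    rw [hτ, show (-1:ℝ) = Real.tan (-(Real.pi/4)) by rw [Real.tan_neg, Real.tan_pi_div_four]]
    exact Real.tan_lt_tan_of_lt_of_lt_pi_div_two (by linarith) (by rw [hφ]; linarith)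
      (by rw [hφ]; linarith)
  have hne : 1 - τ^2 ≠ 0 := by nlinarith
  have key : t * (1 - τ^2) = τ := by
    have : 2 * t = 2 * τ / (1 - τ^2) := by rw [← h2φ, htm]
    field_simp at this
    linarith
  have key2 : t * (t * (1 - τ^2)) = t * τ := by rw [key]
  have hδ : delta t = t * τ := rfl
  rw [hδ]
  nlinarith [key2]

lemma sqrt_eq_delta (t : ℝ) : Real.sqrt (1 + 4*t^2) = 2 * delta t + 1 := by
  have h1 : (1 + 4*t^2) = (2 * delta t + 1)^2 := by nlinarith [delta_sq t]
  rw [h1, Real.sqrt_sq (by linarith [delta_nonneg t])]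

lemma one_sub_two_delta (t : ℝ) : 1 - 2 * delta t = 2 - Real.sqrt (1 + 4*t^2) := by
  rw [sqrt_eq_delta]; ring

lemma g_pos {t : ℝ} (h0 : 0 ≤ t) (h : t < Real.sqrt 3 / 2) : 0 < 1 - 2 * delta t := by
  rw [one_sub_two_delta]
  have h3 : Real.sqrt 3 ^ 2 = 3 := Real.sq_sqrt (by norm_num)
  have h4 : (1:ℝ) + 4*t^2 < 4 := by nlinarith [Real.sqrt_nonneg 3]
  have h5 : Real.sqrt 4 = 2 := by
    rw [show (4:ℝ) = 2^2 by norm_num, Real.sqrt_sq (by norm_num : (0:ℝ) ≤ 2)]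
  have : Real.sqrt (1 + 4*t^2) < 2 := h5 ▸ Real.sqrt_lt_sqrt (by positivity) h4
  linarith

lemma g_le_one (t : ℝ) : 1 - 2 * delta t ≤ 1 := by linarith [delta_nonneg t]

lemma g_anti {a b : ℝ} (ha : 0 ≤ a) (hab : a ≤ b) : 1 - 2 * delta b ≤ 1 - 2 * delta a := by
  rw [one_sub_two_delta, one_sub_two_delta]
  have := Real.sqrt_le_sqrt (show 1 + 4*a^2 ≤ 1 + 4*b^2 by nlinarith)
  linarith

lemma f_intble {a b : ℝ} (ha : 0 ≤ a) (hab : a ≤ b) (hb : b < Real.sqrt 3 / 2) :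
    IntervalIntegrable (fun τ => 1/(1 - 2 * delta τ)) volume a b := by
  apply ContinuousOn.intervalIntegrable
  rw [Set.uIcc_of_le hab]
  have hg : ContinuousOn (fun τ : ℝ => 1 - 2 * delta τ) (Set.Icc a b) := by
    have : (fun τ : ℝ => 1 - 2 * delta τ) = fun τ : ℝ => 2 - Real.sqrt (1 + 4*τ^2) := by
      funext τ; rw [one_sub_two_delta]
    rw [this]
    fun_prop
  exact continuousOn_const.div hg fun x hx =>
    (g_pos (le_trans ha hx.1) (lt_of_le_of_lt hx.2 hb)).ne'

lemma int_lb {a b : ℝ} (ha : 0 ≤ a) (hab : a ≤ b) (hb : b < Real.sqrt 3 / 2) :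
    (b - a) * (1/(1 - 2 * delta a)) ≤ ∫ τ in a..b, 1/(1 - 2 * delta τ) := by
  have h1 : (∫ _ in a..b, (1/(1 - 2 * delta a)) : ℝ) = (b - a) * (1/(1 - 2 * delta a)) := by
    simp [smul_eq_mul]
  rw [← h1]
  apply intervalIntegral.integral_mono_on hab intervalIntegrable_const (f_intble ha hab hb)
  intro x hx
  have hx0 : 0 ≤ x := le_trans ha hx.1
  have hxb : x < Real.sqrt 3 / 2 := lt_of_le_of_lt hx.2 hb
  exact one_div_le_one_div_of_le (g_pos hx0 hxb) (g_anti ha hx.1)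

lemma arcsin_lt_cubic {x : ℝ} (h0 : 0 < x) (h1 : x ≤ 1/2) : Real.arcsin x < x + x^3 := by
  have ha0 : 0 < Real.arcsin x := Real.arcsin_pos.mpr h0
  have ha1 : Real.arcsin x < Real.pi/2 := Real.arcsin_lt_pi_div_two.mpr (by linarith)
  have hlt := Real.lt_tan ha0 ha1
  rw [Real.tan_arcsin] at hlt
  have hs0 : 0 < Real.sqrt (1 - x^2) := Real.sqrt_pos.mpr (by nlinarith)
  have hs2 : Real.sqrt (1 - x^2) ^ 2 = 1 - x^2 := Real.sq_sqrt (by nlinarith)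
  have hkey : 1 ≤ Real.sqrt (1 - x^2) * (1 + x^2) := by
    set u := Real.sqrt (1 - x^2) * (1 + x^2) with hu
    have hu0 : 0 ≤ u := by positivity
    have hu2 : u^2 = (1 - x^2) * (1 + x^2)^2 := by rw [hu, mul_pow, hs2]
    have hx2 : x^2 ≤ 1/4 := by nlinarith
    have hx4 : x^4 ≤ x^2/4 := by nlinarith [sq_nonneg x]
    have hx6 : x^6 ≤ x^2/16 := by
      nlinarith [sq_nonneg x, sq_nonneg (x^2), mul_le_mul_of_nonneg_left hx2 (sq_nonneg (x^2))]
    have hA : 1 ≤ u^2 := by rw [hu2]; nlinarith [sq_nonneg x, hx4, hx6]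
    nlinarith [hA, hu0]
  have : x / Real.sqrt (1 - x^2) ≤ x + x^3 := by
    rw [div_le_iff₀ hs0]
    nlinarith [hkey, h0.le]
  linarith

theorem refinement_step (coff : ℝ) (hcoff : coff ∈ Set.Ioo 0 (Real.sqrt 3 / 2))
    (hcoff' : (∫ τ in (0:ℝ)..coff, 1/(1 - 2 * delta τ)) = 1)
    (hcoffu : ∀ c ∈ Set.Ioo 0 (Real.sqrt 3 / 2),
      (∫ τ in (0:ℝ)..c, 1/(1 - 2 * delta τ)) = 1 → c = coff)
    (t t₁ : ℝ) (ht : 0 < t) (ht' : t < Real.sqrt 3 / 2)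
    (ht₁ : 0 < t₁) (ht₁t : t₁ < t) (ht₁c : t₁ ≤ coff) :
    ∃ r, 0 < r ∧ r < t₁ ∧ (t₁ - r) / (1 - 2 * delta r) ≤ 1/Real.pi ∧
      (1/2) * Real.arcsin (Real.pi * (t₁ - r) / (1 - 2 * delta r)) <
        (Real.pi/2) * (∫ τ in r..t₁, 1/(1 - 2 * delta τ)) ∧
      (Real.pi/2) * (∫ τ in (0:ℝ)..r, 1/(1 - 2 * delta τ)) +
          (1/2) * Real.arcsin (Real.pi * (t₁ - r) / (1 - 2 * delta r)) <
        (Real.pi/2) * (∫ τ in (0:ℝ)..t₁, 1/(1 - 2 * delta τ)) := by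
  clear hcoff hcoff' hcoffu ht₁c
  have hπ := Real.pi_pos
  have ht₁s : t₁ < Real.sqrt 3 / 2 := ht₁t.trans ht'
  obtain ⟨m, hm⟩ : ∃ z : ℝ, z = 1 - 2 * delta t₁ := ⟨_, rfl⟩
  have hm0 : 0 < m := hm ▸ g_pos ht₁.le ht₁s
  have hm1 : m ≤ 1 := hm ▸ g_le_one t₁
  obtain ⟨ε, hε0, hε1, hε2, hε3⟩ : ∃ ε : ℝ, 0 < ε ∧ ε ≤ t₁/2 ∧ ε*(2*Real.pi) ≤ m ∧
      ε*(4*Real.pi^2) ≤ t₁*m^3 := by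
    refine ⟨min (t₁/2) (min (m/(2*Real.pi)) (t₁*m^3/(4*Real.pi^2))), ?_, min_le_left _ _, ?_, ?_⟩
    · exact lt_min (by linarith) (lt_min (div_pos hm0 (by linarith))
        (div_pos (mul_pos ht₁ (pow_pos hm0 3)) (by positivity)))
    · exact (le_div_iff₀ (by linarith)).mp (le_trans (min_le_right _ _) (min_le_left _ _))
    · exact (le_div_iff₀ (by positivity)).mp (le_trans (min_le_right _ _) (min_le_right _ _))
  obtain ⟨r, hr⟩ : ∃ z : ℝ, z = t₁ - ε := ⟨_, rfl⟩
  have hr0 : 0 < r := by rw [hr]; linarith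
  have hrt : r < t₁ := by rw [hr]; linarith
  have hrs : r < Real.sqrt 3 / 2 := hrt.trans ht₁s
  have hsub : t₁ - r = ε := by rw [hr]; ring
  obtain ⟨gr, hgr⟩ : ∃ z : ℝ, z = 1 - 2 * delta r := ⟨_, rfl⟩
  have hgr0 : 0 < gr := hgr ▸ g_pos hr0.le hrs
  have hgr1 : gr ≤ 1 := hgr ▸ g_le_one r
  have hgrm : m ≤ gr := by rw [hm, hgr]; exact g_anti hr0.le hrt.le
  obtain ⟨mid, hmid⟩ : ∃ z : ℝ, z = t₁ - ε/2 := ⟨_, rfl⟩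
  have hmid0 : 0 < mid := by rw [hmid]; linarith
  have hrmid : r ≤ mid := by rw [hr, hmid]; linarith
  have hmidt : mid ≤ t₁ := by rw [hmid]; linarith
  have hmids : mid < Real.sqrt 3 / 2 := lt_of_le_of_lt hmidt ht₁s
  obtain ⟨gm, hgm⟩ : ∃ z : ℝ, z = 1 - 2 * delta mid := ⟨_, rfl⟩
  have hgm0 : 0 < gm := hgm ▸ g_pos hmid0.le hmids
  have hgm1 : gm ≤ 1 := hgm ▸ g_le_one mid
  have hgmgr : gm ≤ gr := by rw [hgm, hgr]; exact g_anti hr0.le hrmid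
  have hmr : mid - r = ε/2 := by rw [hr, hmid]; ring
  have hmrp : t₁ ≤ mid + r := by rw [hr, hmid]; linarith
  -- gap between 1/gm and 1/gr
  have hd : (ε/2) * t₁ ≤ gr - gm := by
    obtain ⟨sa, hsa⟩ : ∃ z : ℝ, z = Real.sqrt (1 + 4*r^2) := ⟨_, rfl⟩
    obtain ⟨sb, hsb⟩ : ∃ z : ℝ, z = Real.sqrt (1 + 4*mid^2) := ⟨_, rfl⟩
    have hsa2 : sa ^ 2 = 1 + 4*r^2 := by rw [hsa]; exact Real.sq_sqrt (by positivity)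
    have hsb2 : sb ^ 2 = 1 + 4*mid^2 := by rw [hsb]; exact Real.sq_sqrt (by positivity)
    have hsa0 : 0 ≤ sa := hsa ▸ Real.sqrt_nonneg _
    have hsb0 : 0 ≤ sb := hsb ▸ Real.sqrt_nonneg _
    have hsa_lt : sa < 2 := by
      have h := hgr0; rw [hgr, one_sub_two_delta, ← hsa] at h; linarith
    have hsb_lt : sb < 2 := by
      have h := hgm0; rw [hgm, one_sub_two_delta, ← hsb] at h; linarith
    have hd0 : 0 ≤ mid^2 - r^2 := by
      have := mul_nonneg (show (0:ℝ) ≤ mid - r by linarith)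
        (show (0:ℝ) ≤ mid + r by linarith)
      nlinarith only [this]
    have hsab : sa ≤ sb := by
      rw [hsa, hsb]; exact Real.sqrt_le_sqrt (by linarith only [hd0])
    have key : (sb - sa) * (sb + sa) = 4*(mid^2 - r^2) := by
      linear_combination hsb2 - hsa2
    have h4 : sb + sa < 4 := by linarith
    have hdiff : mid^2 - r^2 ≤ sb - sa := by
      nlinarith only [key, h4, hd0, hsa0, hsb0, hsab]
    have hgrgm : gr - gm = sb - sa := by
      rw [hgr, hgm, one_sub_two_delta, one_sub_two_delta, ← hsa, ← hsb]; ring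
    rw [hgrgm]
    have hp : (ε/2) * t₁ ≤ (mid - r) * (mid + r) := by
      rw [hmr]
      exact mul_le_mul_of_nonneg_left hmrp (by linarith)
    nlinarith only [hdiff, hp]
  have hgg : gm * gr ≤ 1 := by nlinarith only [hgm0, hgr0, hgm1, hgr1]
  have hgap : 1/gr + ε*t₁/2 ≤ 1/gm := by
    have h1 : 1/gm - 1/gr = (gr - gm)/(gm*gr) := by
      rw [div_sub_div _ _ hgm0.ne' hgr0.ne', one_mul, mul_one]
    have h2 : gr - gm ≤ (gr - gm)/(gm*gr) := by
      rw [le_div_iff₀ (mul_pos hgm0 hgr0)]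
      nlinarith only [hgg, hgmgr]
    linarith [hd]
  -- integral lower bound
  have hI1 : (mid - r) * (1/gr) ≤ ∫ τ in r..mid, 1/(1 - 2 * delta τ) := by
    rw [hgr]; exact int_lb hr0.le hrmid hmids
  have hI2 : (t₁ - mid) * (1/gm) ≤ ∫ τ in mid..t₁, 1/(1 - 2 * delta τ) := by
    rw [hgm]; exact int_lb hmid0.le hmidt ht₁s
  have hIsplit : (∫ τ in r..t₁, 1/(1 - 2 * delta τ))
      = (∫ τ in r..mid, 1/(1 - 2 * delta τ)) + ∫ τ in mid..t₁, 1/(1 - 2 * delta τ) :=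
    (intervalIntegral.integral_add_adjacent_intervals
      (f_intble hr0.le hrmid hmids) (f_intble hmid0.le hmidt ht₁s)).symm
  have hInt : ε * (1/gr) + ε^2*t₁/4 ≤ ∫ τ in r..t₁, 1/(1 - 2 * delta τ) := by
    rw [hIsplit]
    have c2 : (ε/2)*(1/gr + ε*t₁/2) ≤ (ε/2)*(1/gm) :=
      mul_le_mul_of_nonneg_left hgap (by linarith)
    have c3 : (ε/2)*(1/gr) ≤ ∫ τ in r..mid, 1/(1 - 2 * delta τ) := by rw [← hmr]; exact hI1
    have c4 : (ε/2)*(1/gm) ≤ ∫ τ in mid..t₁, 1/(1 - 2 * delta τ) := by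
      have e : t₁ - mid = ε/2 := by rw [hmid]; ring
      rw [← e]; exact hI2
    nlinarith only [c2, c3, c4]
  -- arcsin side
  obtain ⟨x, hx⟩ : ∃ z : ℝ, z = Real.pi * ε / gr := ⟨_, rfl⟩
  have hx0 : 0 < x := by rw [hx]; exact div_pos (mul_pos hπ hε0) hgr0
  have hxhalf : x ≤ 1/2 := by
    rw [hx, div_le_iff₀ hgr0]; nlinarith only [hε2, hgrm]
  have harc := arcsin_lt_cubic hx0 hxhalf
  have hxm : x ≤ Real.pi * ε / m := by
    rw [hx, div_le_div_iff₀ hgr0 hm0]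
    nlinarith only [mul_pos hπ hε0, hgrm]
  have hx3 : x^3 ≤ Real.pi * t₁ * ε^2 / 4 := by
    have h1 : x^3 ≤ (Real.pi*ε/m)^3 := pow_le_pow_left₀ hx0.le hxm 3
    have h2 : (Real.pi*ε/m)^3 ≤ Real.pi * t₁ * ε^2 / 4 := by
      rw [div_pow, div_le_iff₀ (pow_pos hm0 3)]
      have h3 := mul_le_mul_of_nonneg_left hε3
        (le_of_lt (show (0:ℝ) < Real.pi*ε^2/4 by positivity))
      nlinarith only [h3]
    linarith
  have hxeq : Real.pi * (t₁ - r) / (1 - 2 * delta r) = x := by rw [hsub, hx, hgr]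
  have hB : (1/2) * Real.arcsin (Real.pi * (t₁ - r) / (1 - 2 * delta r)) <
      (Real.pi/2) * (∫ τ in r..t₁, 1/(1 - 2 * delta τ)) := by
    rw [hxeq]
    have c5 : (1/2) * Real.arcsin x < (1/2)*(x + x^3) := by linarith
    have e : (Real.pi/2)*(ε*(1/gr) + ε^2*t₁/4) = (1/2)*x + (1/2)*(Real.pi*t₁*ε^2/4) := by
      rw [hx]; ring
    have c7 : (Real.pi/2) * (ε * (1/gr) + ε^2*t₁/4) ≤
        (Real.pi/2) * (∫ τ in r..t₁, 1/(1 - 2 * delta τ)) :=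
      mul_le_mul_of_nonneg_left hInt (by positivity)
    rw [e] at c7
    linarith [hx3]
  refine ⟨r, hr0, hrt, ?_, hB, ?_⟩
  · rw [← hgr, hsub, div_le_div_iff₀ hgr0 hπ]
    nlinarith only [hε2, hgrm, mul_pos hε0 hπ]
  · have hsplit0 : (∫ τ in (0:ℝ)..t₁, 1/(1 - 2 * delta τ))
        = (∫ τ in (0:ℝ)..r, 1/(1 - 2 * delta τ)) + ∫ τ in r..t₁, 1/(1 - 2 * delta τ) :=
      (intervalIntegral.integral_add_adjacent_intervals
        (f_intble le_rfl hr0.le hrs) (f_intble hr0.le hrt.le ht₁s)).symm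
    rw [hsplit0, mul_add]
    linarith [hB]
end
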